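/- arXiv:2410.19092 — 2 statements merged into one kernel-verified Lean document; each statement's English description precedes it below -/
import Mathlib

section
/- Let ε ∈ (0, 1/2) and define φ(t) = ε^t/(ε^t + (1−ε)^t). Then for every t > 0, φ(t) ≥ ε + (ln 2)·(ε·log₂(ε) + ε·H(ε))·(t − 1), where H(ε) = −ε·log₂ ε − (1−ε)·log₂(1−ε) is the binary entropy function. -/
/-!
Writing `a = log (ε / (1 - ε)) < 0`, one has `φ(t) = σ(t a)` for the logistic sigmoid `σ`, and
the right-hand side is `ε + ε (1 - ε) a (t - 1) = σ(a) + σ'(a) (t a - a)`, the tangent line of `σ`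
at `a`. Since `σ' = σ (1 - σ)` is increasing where `σ ≤ 1/2`, the sigmoid is convex on `(-∞, 0]`,
which contains both `a` and `t a`, so it lies above its tangent line there.
-/

/-- Binary entropy function (base-2). -/
noncomputable def binEnt (x : ℝ) : ℝ :=
  -(x * Real.logb 2 x) - (1 - x) * Real.logb 2 (1 - x)

open Set Real

theorem ConvexOn.add_deriv_mul_sub_le {S : Set ℝ} {f : ℝ → ℝ} {f' x y : ℝ}
    (hf : ConvexOn ℝ S f) (hx : x ∈ S) (hy : y ∈ S) (hf' : HasDerivAt f f' x) :
    f x + f' * (y - x) ≤ f y := by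
  rcases lt_trichotomy x y with hxy | rfl | hyx
  · have hslope := hf.le_slope_of_hasDerivAt hx hy hxy hf'
    rw [slope_def_field, le_div_iff₀ (sub_pos.mpr hxy)] at hslope
    linarith
  · simp
  · have hslope := hf.slope_le_of_hasDerivAt hy hx hyx hf'
    rw [slope_def_field, div_le_iff₀ (sub_pos.mpr hyx)] at hslope
    linarith

namespace Real

theorem sigmoid_le_half_of_nonpos {x : ℝ} (hx : x ≤ 0) : sigmoid x ≤ 2⁻¹ :=
  sigmoid_zero ▸ sigmoid_le hx

theorem convexOn_sigmoid_Iic : ConvexOn ℝ (Iic 0) sigmoid := by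
  refine MonotoneOn.convexOn_of_deriv (convex_Iic 0) continuous_sigmoid.continuousOn
    differentiable_sigmoid.differentiableOn (MonotoneOn.mono ?_ interior_subset)
  intro x _ y hy hxy
  have hσ : sigmoid x ≤ sigmoid y := sigmoid_le hxy
  have hσy : sigmoid y ≤ 2⁻¹ := sigmoid_le_half_of_nonpos hy
  rw [deriv_sigmoid]
  nlinarith [mul_nonneg (sub_nonneg.mpr hσ) (by linarith : 0 ≤ 1 - sigmoid x - sigmoid y)]

theorem rpow_div_rpow_add_rpow_eq_sigmoid {p q : ℝ} (hp : 0 < p) (hq : 0 < q) (t : ℝ) :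
    p ^ t / (p ^ t + q ^ t) = sigmoid (t * log (p / q)) := by
  have hexp : exp (-(t * log (p / q))) = q ^ t / p ^ t := by
    rw [← div_rpow hq.le hp.le, rpow_def_of_pos (by positivity), ← inv_div, log_inv]
    ring_nf
  have hpt : 0 < p ^ t := rpow_pos_of_pos hp t
  rw [sigmoid_def, hexp]
  field_simp

theorem sigmoid_log_div_one_sub {ε : ℝ} (hε0 : 0 < ε) (hε1 : ε < 1) :
    sigmoid (log (ε / (1 - ε))) = ε := by
  simpa using (rpow_div_rpow_add_rpow_eq_sigmoid hε0 (sub_pos.mpr hε1) 1).symm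

end Real

theorem log_two_mul_logb_add_mul_binEnt {ε : ℝ} (hε : ε ≠ 0) (hε' : 1 - ε ≠ 0) :
    log 2 * (ε * logb 2 ε + ε * binEnt ε) = ε * (1 - ε) * log (ε / (1 - ε)) := by
  rw [binEnt, log_div hε hε']
  simp only [logb]
  field_simp
  ring

/-- For `ε ∈ (0, 1/2)` and `φ(t) = ε^t / (ε^t + (1−ε)^t)`, every `t > 0`
satisfies `φ(t) ≥ ε + ln 2 · (ε·log₂ ε + ε·H(ε)) · (t − 1)`. -/
theorem phi_tangent_line_lower_bound (ε : ℝ) (hε0 : 0 < ε) (hε : ε < 1 / 2)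
    (t : ℝ) (ht : 0 < t) :
    ε + Real.log 2 * (ε * Real.logb 2 ε + ε * binEnt ε) * (t - 1) ≤
      ε ^ t / (ε ^ t + (1 - ε) ^ t) := by
  have hε1 : 0 < 1 - ε := by linarith
  set a := log (ε / (1 - ε))
  have ha : a ≤ 0 := log_nonpos (by positivity) ((div_le_one hε1).mpr (by linarith))
  have hσa : sigmoid a = ε := sigmoid_log_div_one_sub hε0 (by linarith)
  have htangent := convexOn_sigmoid_Iic.add_deriv_mul_sub_le ha
    (mul_nonpos_of_nonneg_of_nonpos ht.le ha : t * a ≤ 0) (hasDerivAt_sigmoid a)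
  rw [log_two_mul_logb_add_mul_binEnt hε0.ne' hε1.ne', rpow_div_rpow_add_rpow_eq_sigmoid hε0 hε1]
  rw [hσa] at htangent
  linarith
end

section
/- Let X be a finite set, h* : X → {0,1}, ε* ∈ (0, 1/2), and let D be a distribution on X × {0,1} with independent label noise of level ε*, i.e. P_{(X,Y)∼D}(Y ≠ h*(X) | X = x) = ε* for all x in the support of the marginal of D. Let S = {(X_i,Y_i)}_{i=1}^N be i.i.d. from D with P(S consistent) > 0, and define the effective training noise ε̂_tr = P(Y_1 ≠ h*(X_1) | S consistent). Then ε̂_tr ≤ ε*, and |ε̂_tr − ε*| ≤ |ln(2)·(ε*·log₂(ε*) + ε*·H(ε*))| · (N−1) · D_max / P(S consistent), where H(ε) = −ε·log₂ ε − (1−ε)·log₂(1−ε) is binary entropy and D_max = max_x P_{(X,Y)∼D}(X = x). -/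
open Finset

/-- A probability distribution on a finite type, given by its mass function. -/
structure FinDist (α : Type*) [Fintype α] where
  p : α → ℝ
  nonneg : ∀ a, 0 ≤ p a
  sum_one : ∑ a, p a = 1

namespace FinDist

variable {α : Type*} [Fintype α]

/-- Probability of an event. -/
noncomputable def prob (D : FinDist α) (E : Set α) : ℝ :=
  ∑ a, E.indicator D.p a

/-- Expectation of a real-valued random variable. -/
noncomputable def expect (D : FinDist α) (f : α → ℝ) : ℝ :=
  ∑ a, D.p a * f a

/-- The `N`-fold i.i.d. product of a distribution (the law of an i.i.d. sample). -/
noncomputable def pow (D : FinDist α) (N : ℕ) : FinDist (Fin N → α) where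
  p := fun s => ∏ i, D.p (s i)
  nonneg := fun s => Finset.prod_nonneg fun i _ => D.nonneg _
  sum_one := by
    classical
    rw [← Fintype.sum_pow D.p N, D.sum_one, one_pow]

end FinDist

/-- A training set is consistent if equal inputs receive equal labels. -/
def ConsistentS {X : Type*} {N : ℕ} (s : Fin N → X × Bool) : Prop :=
  ∀ i j, (s i).1 = (s j).1 → (s i).2 = (s j).2

/-- A hypothesis interpolates a training set if it fits every sample
(zero empirical risk). -/
def Interpolates {X : Type*} {N : ℕ} (h : X → Bool) (s : Fin N → X × Bool) : Prop :=
  ∀ i, h (s i).1 = (s i).2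

/-- Population risk (generalization error) of a hypothesis. -/
noncomputable def risk {X : Type*} [Fintype X] (D : FinDist (X × Bool)) (h : X → Bool) : ℝ :=
  D.prob {a | h a.1 ≠ a.2}

/-- Peak marginal probability `D_max = max_x P(X = x)`. -/
noncomputable def dmax {X : Type*} [Fintype X] (D : FinDist (X × Bool)) : ℝ :=
  ⨆ x : X, D.prob {a | a.1 = x}

/-!
Flipping the labels of all samples that share the input of sample `i₀` is an involution of the
consistent samples that exchanges "label `i₀` clean" with "label `i₀` noisy". Under independent
noise with odds `r = ε / (1 - ε)` it multiplies the weight of a clean sample by `r ^ (k + 1)`,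
where `k` is the number of other samples with the same input. Hence
`ε P(cons) - P(noisy₀ ∧ cons) = E[ε (1 - r ^ k); clean₀ ∧ cons]`, which is nonnegative and, by
Bernoulli's inequality, at most `ε (1 - r) E[k; clean₀] ≤ ε (1 - 2ε) (N - 1) D_max`, since each
other sample hits the input of a clean sample `i₀` with probability at most `(1 - ε) D_max`.
Finally `ε (1 - 2ε) ≤ ε (1 - ε) ln ((1 - ε) / ε)`, which is the constant of the statement.
-/

theorem one_sub_pow_le_mul_one_sub {r : ℝ} (hr : -1 ≤ r) (c : ℕ) : 1 - r ^ c ≤ c * (1 - r) := by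
  have hbernoulli := one_add_mul_le_pow (a := r - 1) (by linarith) c
  rw [add_sub_cancel] at hbernoulli
  linarith

namespace FinDist

variable {α : Type*} [Fintype α] (D : FinDist α)

theorem prob_nonneg (E : Set α) : 0 ≤ D.prob E :=
  sum_nonneg fun a _ => Set.indicator_nonneg (fun a _ => D.nonneg a) a

theorem prob_singleton (a : α) : D.prob {a} = D.p a := by
  classical
  simp [prob, Set.indicator_apply]

theorem prob_union {E F : Set α} (h : Disjoint E F) : D.prob (E ∪ F) = D.prob E + D.prob F := by
  simp only [prob, Set.indicator_union_of_disjoint h, sum_add_distrib]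

theorem prob_compl (E : Set α) : D.prob Eᶜ = 1 - D.prob E := by
  rw [eq_sub_iff_add_eq, ← prob_union D disjoint_compl_left, Set.compl_union_self]
  simp only [prob, Set.indicator_univ, D.sum_one]

theorem expect_indicator_one (E : Set α) : D.expect (E.indicator 1) = D.prob E := by
  refine sum_congr rfl fun a _ => ?_
  by_cases ha : a ∈ E <;> simp [ha]

theorem expect_pow_prod {N : ℕ} (f : Fin N → α → ℝ) :
    (D.pow N).expect (fun s => ∏ i, f i (s i)) = ∏ i, D.expect (f i) := by
  classical
  simp only [expect, pow, ← prod_mul_distrib]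
  exact (Fintype.prod_sum fun i a => D.p a * f i a).symm

theorem expect_pow_mul {N : ℕ} {i j : Fin N} (hij : i ≠ j) (f g : α → ℝ) :
    (D.pow N).expect (fun s => f (s i) * g (s j)) = D.expect f * D.expect g := by
  classical
  let F : Fin N → α → ℝ := fun l => if l = i then f else if l = j then g else 1
  have hexp1 : D.expect 1 = 1 := by simp [expect, D.sum_one]
  have hprod : ∀ s : Fin N → α, ∏ l, F l (s l) = f (s i) * g (s j) := fun s => by
    rw [prod_eq_mul i j hij] <;> simp +contextual [F, hij.symm]
  have hexp : ∏ l, D.expect (F l) = D.expect f * D.expect g := by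
    rw [prod_eq_mul i j hij] <;> simp +contextual [F, hij.symm, hexp1]
  simpa only [hprod, hexp] using D.expect_pow_prod F

theorem expect_pow_apply_apply [DecidableEq α] {N : ℕ} {i j : Fin N} (hij : i ≠ j)
    (F : α → α → ℝ) :
    (D.pow N).expect (fun s => F (s i) (s j)) = ∑ a, D.p a * D.expect (F a) := by
  have hF : ∀ s : Fin N → α, F (s i) (s j) = ∑ a, (if s i = a then 1 else 0) * F a (s j) :=
    fun s => by simp
  calc (D.pow N).expect (fun s => F (s i) (s j))
      = ∑ a, (D.pow N).expect (fun s => (if s i = a then 1 else 0) * F a (s j)) := by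
        simp only [expect, hF, mul_sum]; exact sum_comm
    _ = ∑ a, D.p a * D.expect (F a) := by
        refine sum_congr rfl fun a _ => ?_
        rw [expect_pow_mul D hij (fun b => if b = a then 1 else 0) (F a)]
        simp [expect]

end FinDist

theorem prob_fst_eq_le_dmax {X : Type*} [Fintype X] (D : FinDist (X × Bool)) (x : X) :
    D.prob {a | a.1 = x} ≤ dmax D :=
  le_ciSup (f := fun x => D.prob {a : X × Bool | a.1 = x}) (Set.finite_range _).bddAbove x

theorem dmax_nonneg {X : Type*} [Fintype X] (D : FinDist (X × Bool)) : 0 ≤ dmax D :=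
  Real.iSup_nonneg fun _ => D.prob_nonneg _

section NoiseModel

variable {X : Type*} [Fintype X] {D : FinDist (X × Bool)} {h : X → Bool}

theorem p_not_eq_odds_mul {ε : ℝ} (hε : ε ≠ 1)
    (hindep : ∀ x, D.prob {a | a.1 = x ∧ a.2 ≠ h x} = ε * D.prob {a | a.1 = x}) (x : X) :
    D.p (x, !h x) = ε / (1 - ε) * D.p (x, h x) := by
  have hnoisy : {a : X × Bool | a.1 = x ∧ a.2 ≠ h x} = {(x, !h x)} := by
    ext ⟨y, b⟩; cases b <;> cases h x <;> simp [and_comm]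
  have hfiber : {a : X × Bool | a.1 = x} = {(x, h x)} ∪ {(x, !h x)} := by
    ext ⟨y, b⟩; cases b <;> cases h x <;> simp [and_comm]
  have hdisj : Disjoint ({(x, h x)} : Set (X × Bool)) {(x, !h x)} := by simp
  have hx := hindep x
  rw [hnoisy, hfiber, D.prob_union hdisj, D.prob_singleton, D.prob_singleton] at hx
  field_simp [sub_ne_zero.2 hε.symm]
  linarith

end NoiseModel

section FlipLabels

variable {X : Type*} [DecidableEq X] {N : ℕ} (i₀ : Fin N)

def flipLabelsAt (s : Fin N → X × Bool) : Fin N → X × Bool :=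
  fun i => if (s i).1 = (s i₀).1 then ((s i).1, !(s i).2) else s i

def numCollisions (s : Fin N → X × Bool) : ℕ :=
  #{i ∈ univ.erase i₀ | (s i).1 = (s i₀).1}

@[simp]
theorem flipLabelsAt_fst (s : Fin N → X × Bool) (i : Fin N) :
    (flipLabelsAt i₀ s i).1 = (s i).1 := by
  unfold flipLabelsAt; split_ifs <;> rfl

@[simp]
theorem flipLabelsAt_self (s : Fin N → X × Bool) :
    flipLabelsAt i₀ s i₀ = ((s i₀).1, !(s i₀).2) := by
  simp [flipLabelsAt]

theorem flipLabelsAt_involutive : Function.Involutive (flipLabelsAt (X := X) i₀) := by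
  intro s; funext i
  by_cases h : (s i).1 = (s i₀).1 <;> ext <;> simp [flipLabelsAt, h]

theorem ConsistentS.flipLabelsAt {s : Fin N → X × Bool} (hs : ConsistentS s) :
    ConsistentS (flipLabelsAt i₀ s) := by
  intro i j hij
  simp only [flipLabelsAt_fst] at hij
  by_cases h : (s j).1 = (s i₀).1 <;> simp [_root_.flipLabelsAt, hij, h, hs i j hij]

theorem consistentS_flipLabelsAt_iff {s : Fin N → X × Bool} :
    ConsistentS (flipLabelsAt i₀ s) ↔ ConsistentS s :=
  ⟨fun h => flipLabelsAt_involutive i₀ s ▸ h.flipLabelsAt i₀, (·.flipLabelsAt i₀)⟩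

end FlipLabels

section FlipWeights

variable {X : Type*} [Fintype X] [DecidableEq X] {N : ℕ} (i₀ : Fin N)
  {D : FinDist (X × Bool)} {h : X → Bool}

theorem pow_p_flipLabelsAt {r : ℝ} (hr : ∀ x, D.p (x, !h x) = r * D.p (x, h x))
    {s : Fin N → X × Bool} (hs : ConsistentS s) (hclean : (s i₀).2 = h (s i₀).1) :
    (D.pow N).p (flipLabelsAt i₀ s) = r ^ (numCollisions i₀ s + 1) * (D.pow N).p s := by
  have hfactor : ∀ i, D.p (flipLabelsAt i₀ s i) =
      (if (s i).1 = (s i₀).1 then r else 1) * D.p (s i) := by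
    intro i
    by_cases hi : (s i).1 = (s i₀).1
    · have hlabel : (s i).2 = h (s i).1 := by rw [hs i i₀ hi, hclean, hi]
      rw [flipLabelsAt, if_pos hi, if_pos hi, hlabel, hr, ← hlabel]
    · rw [flipLabelsAt, if_neg hi, if_neg hi, one_mul]
  have hcard : #{i | (s i).1 = (s i₀).1} = numCollisions i₀ s + 1 := by
    rw [numCollisions, filter_erase, card_erase_add_one (by simp)]
  simp only [FinDist.pow, hfactor, prod_mul_distrib, prod_ite, prod_const, one_pow, mul_one,
    hcard]

theorem sum_indicator_noisy_eq_flipLabelsAt (f : (Fin N → X × Bool) → ℝ) :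
    ∑ s, {s | (s i₀).2 ≠ h (s i₀).1 ∧ ConsistentS s}.indicator f s =
      ∑ s, {s | (s i₀).2 = h (s i₀).1 ∧ ConsistentS s}.indicator (f ∘ flipLabelsAt i₀) s := by
  classical
  rw [← Equiv.sum_comp (flipLabelsAt_involutive i₀).toPerm]
  refine sum_congr rfl fun s _ => ?_
  simp [Set.indicator_apply, consistentS_flipLabelsAt_iff]

theorem prob_consistentS_sub_prob_noisy_eq {ε : ℝ} (hε : ε ≠ 1)
    (hr : ∀ x, D.p (x, !h x) = ε / (1 - ε) * D.p (x, h x)) :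
    ε * (D.pow N).prob {s | ConsistentS s} -
        (D.pow N).prob {s | (s i₀).2 ≠ h (s i₀).1 ∧ ConsistentS s} =
      ∑ s, {s | (s i₀).2 = h (s i₀).1 ∧ ConsistentS s}.indicator
        (fun s => ε * (D.pow N).p s * (1 - (ε / (1 - ε)) ^ numCollisions i₀ s)) s := by
  set C : Set (Fin N → X × Bool) := {s | (s i₀).2 = h (s i₀).1 ∧ ConsistentS s}
  set B : Set (Fin N → X × Bool) := {s | (s i₀).2 ≠ h (s i₀).1 ∧ ConsistentS s}
  have hunion : {s | ConsistentS s} = C ∪ B := by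
    ext s; simp only [C, B, Set.mem_union, Set.mem_ofPred_eq]; tauto
  have hdisj : Disjoint C B := Set.disjoint_left.2 fun s hC hB => hB.1 hC.1
  have hB : (D.pow N).prob B = ∑ s, C.indicator
      (fun s => (ε / (1 - ε)) ^ (numCollisions i₀ s + 1) * (D.pow N).p s) s := by
    rw [FinDist.prob, sum_indicator_noisy_eq_flipLabelsAt]
    refine sum_congr rfl fun s _ => ?_
    show C.indicator _ s = _
    by_cases hs : s ∈ C
    · rw [Set.indicator_of_mem hs, Set.indicator_of_mem hs, Function.comp_apply,
        pow_p_flipLabelsAt i₀ hr hs.2 hs.1]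
    · rw [Set.indicator_of_notMem hs, Set.indicator_of_notMem hs]
  have hodds : ∀ c : ℕ, (1 - ε) * (ε / (1 - ε)) ^ (c + 1) = ε * (ε / (1 - ε)) ^ c := fun c => by
    rw [pow_succ]; field_simp [sub_ne_zero.2 hε.symm]
  rw [hunion, FinDist.prob_union _ hdisj, hB, FinDist.prob, mul_add, mul_sum, mul_sum,
    ← sum_add_distrib, ← sum_sub_distrib]
  refine sum_congr rfl fun s _ => ?_
  by_cases hs : s ∈ C
  · simp only [Set.indicator_of_mem hs]
    linear_combination -(D.pow N).p s * hodds (numCollisions i₀ s)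
  · simp only [Set.indicator_of_notMem hs]
    ring

theorem sum_indicator_clean_mul_numCollisions_le (D : FinDist (X × Bool)) (h : X → Bool) :
    ∑ s, {s | (s i₀).2 = h (s i₀).1}.indicator
        (fun s => (D.pow N).p s * numCollisions i₀ s) s ≤
      (N - 1) * (D.prob {a | a.2 = h a.1} * dmax D) := by
  classical
  let F : X × Bool → X × Bool → ℝ := fun a b => if a.2 = h a.1 ∧ b.1 = a.1 then 1 else 0
  have hsplit : ∀ s, {s | (s i₀).2 = h (s i₀).1}.indicator
      (fun s => (D.pow N).p s * numCollisions i₀ s) s =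
        ∑ i ∈ univ.erase i₀, (D.pow N).p s * F (s i₀) (s i) := fun s => by
    by_cases hs : (s i₀).2 = h (s i₀).1
    · rw [Set.indicator_of_mem (show s ∈ {s | (s i₀).2 = h (s i₀).1} from hs), numCollisions,
        natCast_card_filter, mul_sum]
      simp [F, hs]
    · rw [Set.indicator_of_notMem (show s ∉ {s | (s i₀).2 = h (s i₀).1} from hs)]
      simp [F, hs]
  have hpair : ∀ i ∈ univ.erase i₀, (D.pow N).expect (fun s => F (s i₀) (s i)) ≤
      D.prob {a | a.2 = h a.1} * dmax D := fun i hi => by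
    rw [FinDist.expect_pow_apply_apply D (ne_of_mem_erase hi).symm, FinDist.prob, sum_mul]
    refine sum_le_sum fun a _ => ?_
    by_cases ha : a.2 = h a.1
    · have hF : F a = {b | b.1 = a.1}.indicator 1 := by
        ext b; simp [F, ha, Set.indicator_apply]
      rw [hF, FinDist.expect_indicator_one,
        Set.indicator_of_mem (show a ∈ {a | a.2 = h a.1} from ha)]
      exact mul_le_mul_of_nonneg_left (prob_fst_eq_le_dmax D a.1) (D.nonneg a)
    · have hF : F a = 0 := by ext b; simp [F, ha]
      simp [hF, FinDist.expect, Set.indicator_of_notMem (show a ∉ {a | a.2 = h a.1} from ha)]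
  calc _ = ∑ i ∈ univ.erase i₀, (D.pow N).expect (fun s => F (s i₀) (s i)) := by
        simp only [hsplit, FinDist.expect]; exact sum_comm
    _ ≤ ∑ i ∈ univ.erase i₀, D.prob {a | a.2 = h a.1} * dmax D := sum_le_sum hpair
    _ = (N - 1) * (D.prob {a | a.2 = h a.1} * dmax D) := by
        rw [sum_const, card_erase_of_mem (mem_univ _), card_univ, Fintype.card_fin, nsmul_eq_mul,
          Nat.cast_pred i₀.pos]

theorem prob_consistentS_sub_prob_noisy_bounds {ε : ℝ} (hε0 : 0 ≤ ε) (hε : ε ≤ 1 / 2)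
    (hindep : ∀ x, D.prob {a | a.1 = x ∧ a.2 ≠ h x} = ε * D.prob {a | a.1 = x})
    (hclean : D.prob {a | a.2 = h a.1} = 1 - ε) :
    0 ≤ ε * (D.pow N).prob {s | ConsistentS s} -
        (D.pow N).prob {s | (s i₀).2 ≠ h (s i₀).1 ∧ ConsistentS s} ∧
      ε * (D.pow N).prob {s | ConsistentS s} -
          (D.pow N).prob {s | (s i₀).2 ≠ h (s i₀).1 ∧ ConsistentS s} ≤
        ε * (1 - 2 * ε) * ((N - 1) * dmax D) := by
  have hε1 : ε ≠ 1 := by linarith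
  set r := ε / (1 - ε) with hr
  have hr0 : 0 ≤ r := div_nonneg hε0 (by linarith)
  have hr1 : r ≤ 1 := (div_le_one (by linarith)).2 (by linarith)
  have h1r : 0 ≤ 1 - r := sub_nonneg.2 hr1
  rw [prob_consistentS_sub_prob_noisy_eq i₀ hε1 (p_not_eq_odds_mul hε1 hindep)]
  refine ⟨sum_nonneg fun s _ => Set.indicator_nonneg (fun s _ =>
    mul_nonneg (mul_nonneg hε0 ((D.pow N).nonneg s)) (sub_nonneg.2 (pow_le_one₀ hr0 hr1))) s, ?_⟩
  calc _ ≤ ∑ s, {s | (s i₀).2 = h (s i₀).1}.indicator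
          (fun s => ε * (1 - r) * ((D.pow N).p s * numCollisions i₀ s)) s := by
        refine sum_le_sum fun s _ => (Set.indicator_le_indicator ?_).trans
          (Set.indicator_le_indicator_of_subset (fun s hs => hs.1) (fun s => ?_) s)
        · calc ε * (D.pow N).p s * (1 - r ^ numCollisions i₀ s)
              ≤ ε * (D.pow N).p s * (numCollisions i₀ s * (1 - r)) :=
                mul_le_mul_of_nonneg_left (one_sub_pow_le_mul_one_sub (by linarith) _)
                  (mul_nonneg hε0 ((D.pow N).nonneg s))
            _ = ε * (1 - r) * ((D.pow N).p s * numCollisions i₀ s) := by ring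
        · exact mul_nonneg (mul_nonneg hε0 h1r)
            (mul_nonneg ((D.pow N).nonneg s) (Nat.cast_nonneg _))
    _ = ε * (1 - r) * ∑ s, {s | (s i₀).2 = h (s i₀).1}.indicator
          (fun s => (D.pow N).p s * numCollisions i₀ s) s := by
        simp only [Set.indicator_const_mul, mul_sum]
    _ ≤ ε * (1 - r) * ((N - 1) * (D.prob {a | a.2 = h a.1} * dmax D)) :=
        mul_le_mul_of_nonneg_left (sum_indicator_clean_mul_numCollisions_le i₀ D h)
          (mul_nonneg hε0 h1r)
    _ = ε * (1 - 2 * ε) * ((N - 1) * dmax D) := by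
        rw [hclean, hr]
        field_simp [sub_ne_zero.2 hε1.symm]
        ring

end FlipWeights

theorem log_two_mul_logb_add_mul_binEnt_s16 (ε : ℝ) :
    Real.log 2 * (ε * Real.logb 2 ε + ε * binEnt ε) =
      ε * (1 - ε) * (Real.log ε - Real.log (1 - ε)) := by
  have hlog2 : Real.log 2 ≠ 0 := (Real.log_pos one_lt_two).ne'
  simp only [binEnt, Real.logb]
  field_simp
  ring

theorem mul_one_sub_two_mul_le_abs_log_two_mul {ε : ℝ} (hε0 : 0 < ε) (hε1 : ε < 1) :
    ε * (1 - 2 * ε) ≤ |Real.log 2 * (ε * Real.logb 2 ε + ε * binEnt ε)| := by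
  have hε1' : 0 < 1 - ε := by linarith
  rw [log_two_mul_logb_add_mul_binEnt_s16]
  calc ε * (1 - 2 * ε) = ε * (1 - ε) * (1 - ((1 - ε) / ε)⁻¹) := by field_simp; ring
    _ ≤ ε * (1 - ε) * Real.log ((1 - ε) / ε) :=
        mul_le_mul_of_nonneg_left (Real.one_sub_inv_le_log_of_pos (by positivity))
          (by positivity)
    _ = -(ε * (1 - ε) * (Real.log ε - Real.log (1 - ε))) := by
        rw [Real.log_div hε1'.ne' hε0.ne']; ring
    _ ≤ _ := neg_le_abs _

/-- under independent label noise of level `ε* ∈ (0,1/2)`, the effective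
training-set noise `ε̂_tr = P(Y₁ ≠ h*(X₁) | S consistent)` satisfies `ε̂_tr ≤ ε*` and
`|ε̂_tr − ε*| ≤ |ln 2 · (ε*·log₂ ε* + ε*·H(ε*))| · (N−1) · D_max / P(S consistent)`. -/
theorem effective_training_noise_bound
    (X : Type) [Fintype X] (D : FinDist (X × Bool)) (hstar : X → Bool)
    (εstar : ℝ) (hε0 : 0 < εstar) (hε : εstar < 1 / 2)
    (hindep : ∀ x : X,
      D.prob {a | a.1 = x ∧ a.2 ≠ hstar x} = εstar * D.prob {a | a.1 = x})
    (hεdef : εstar = D.prob {a | a.2 ≠ hstar a.1})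
    (N : ℕ) (hN : 1 ≤ N)
    (hcons : 0 < (D.pow N).prob {s | ConsistentS s}) :
    (D.pow N).prob {s | (s ⟨0, hN⟩).2 ≠ hstar (s ⟨0, hN⟩).1 ∧ ConsistentS s} /
        (D.pow N).prob {s | ConsistentS s} ≤ εstar ∧
    |(D.pow N).prob {s | (s ⟨0, hN⟩).2 ≠ hstar (s ⟨0, hN⟩).1 ∧ ConsistentS s} /
          (D.pow N).prob {s | ConsistentS s} - εstar| ≤
      |Real.log 2 * (εstar * Real.logb 2 εstar + εstar * binEnt εstar)| *
        ((N : ℝ) - 1) * dmax D / (D.pow N).prob {s | ConsistentS s} := by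
  classical
  have hclean : D.prob {a | a.2 = hstar a.1} = 1 - εstar := by
    rw [hεdef, ← FinDist.prob_compl]
    congr 1
    ext a
    simp
  obtain ⟨hgap0, hgap⟩ :=
    prob_consistentS_sub_prob_noisy_bounds ⟨0, hN⟩ hε0.le hε.le hindep hclean
  set Pc := (D.pow N).prob {s | ConsistentS s}
  set A := (D.pow N).prob {s | (s ⟨0, hN⟩).2 ≠ hstar (s ⟨0, hN⟩).1 ∧ ConsistentS s}
  have hle : A / Pc ≤ εstar := (div_le_iff₀ hcons).2 (by linarith)
  refine ⟨hle, ?_⟩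
  have hcount : 0 ≤ ((N : ℝ) - 1) * dmax D :=
    mul_nonneg (by simpa using hN) (dmax_nonneg D)
  rw [abs_of_nonpos (sub_nonpos.2 hle), neg_sub, mul_assoc]
  calc εstar - A / Pc = (εstar * Pc - A) / Pc := by field_simp
    _ ≤ εstar * (1 - 2 * εstar) * (((N : ℝ) - 1) * dmax D) / Pc := by gcongr
    _ ≤ _ := by
        gcongr
        exact mul_one_sub_two_mul_le_abs_log_two_mul hε0 (by linarith)
end
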